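/- arXiv:2602.18126 — 2 statements merged into one kernel-verified Lean document; each statement's English description precedes it below -/
import Mathlib

section
/- Let g : ℕ → ℂ be a nonzero truncated divisor sum, i.e., its Eratosthenes transform g' has finite support with D := max(supp(g')). Define the Wintner coefficients ĝ(q) := ∑_{d ≤ D, q ∣ d} g'(d)/d for each q ≥ 1. Then for all a ≥ 1, g(a) = ∑_{q ≤ D} ĝ(q) c_q(a), a finite Ramanujan expansion of fixed length D. -/
/-!
Expanding `ĝ(q)` and exchanging the two finite sums turns the right-hand side into
`∑_{d ≤ D} g'(d)/d · ∑_{q ∣ d} c_q(a)`. Grouping the `d`-th roots of unity by their exact order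
gives `∑_{q ∣ d} c_q(a) = ∑_{k < d} e^{2πi k a/d}`, which is `d` if `d ∣ a` and `0` otherwise.
What is left is `∑_{d ∣ a, d ≤ D} g'(d)`, and since `g'` vanishes beyond `D` this is
`∑_{d ∣ a} g'(d) = g(a)` by Möbius inversion.
-/

open Finset

/-- The Eratosthenes transform `g' = μ * g`. -/
noncomputable def eratosthenes (g : ℕ → ℂ) (d : ℕ) : ℂ :=
  ∑ t ∈ d.divisors, g t * (ArithmeticFunction.moebius (d / t) : ℂ)

/-- The Ramanujan sum `c_q(a) = ∑_{j mod q, gcd(j,q)=1} e^{2πi j a / q}`. -/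
noncomputable def ramanujanSum (q a : ℕ) : ℂ :=
  ∑ j ∈ (Finset.range q).filter (fun j => Nat.Coprime j q),
    Complex.exp (2 * Real.pi * Complex.I * j * a / q)

/-- The Wintner coefficient `ĝ(q) = ∑_{d ≤ D, q ∣ d} g'(d)/d`. -/
noncomputable def wintner (g : ℕ → ℂ) (D q : ℕ) : ℂ :=
  ∑ d ∈ (Finset.Icc 1 D).filter (fun d => q ∣ d), eratosthenes g d / d

theorem sum_divisors_eratosthenes (g : ℕ → ℂ) {n : ℕ} (hn : 0 < n) :
    ∑ d ∈ n.divisors, eratosthenes g d = g n := by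
  revert n
  rw [ArithmeticFunction.sum_eq_iff_sum_mul_moebius_eq]
  intro n _
  rw [Nat.sum_divisorsAntidiagonal' (f := fun x y => (ArithmeticFunction.moebius x : ℂ) * g y)]
  exact sum_congr rfl fun t _ => mul_comm _ _

theorem sum_range_exp_eq_ite {d : ℕ} (hd : d ≠ 0) (a : ℕ) :
    ∑ k ∈ range d, Complex.exp (2 * Real.pi * Complex.I * k * a / d)
      = if d ∣ a then (d : ℂ) else 0 := by
  set ζ := Complex.exp (2 * Real.pi * Complex.I / d)
  have hζ : IsPrimitiveRoot ζ d := Complex.isPrimitiveRoot_exp d hd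
  have hpow (k : ℕ) : Complex.exp (2 * Real.pi * Complex.I * k * a / d) = (ζ ^ a) ^ k := by
    rw [← pow_mul, ← Complex.exp_nat_mul]
    push_cast
    ring_nf
  simp only [hpow]
  split_ifs with hda
  · simp [(hζ.pow_eq_one_iff_dvd a).2 hda]
  · have hne : ζ ^ a ≠ 1 := mt (hζ.pow_eq_one_iff_dvd a).1 hda
    have hroot : (ζ ^ a) ^ d = 1 := by rw [← pow_mul, mul_comm, pow_mul, hζ.pow_eq_one, one_pow]
    rw [geom_sum_eq hne, hroot, sub_self, zero_div]

theorem ramanujanSum_div_eq_sum_gcd_eq {d e : ℕ} (hd : d ≠ 0) (hed : e ∣ d) (a : ℕ) :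
    ramanujanSum (d / e) a
      = ∑ k ∈ (range d).filter (fun k => k.gcd d = e),
          Complex.exp (2 * Real.pi * Complex.I * k * a / d) := by
  obtain ⟨q, rfl⟩ := hed
  have he : 0 < e := Nat.pos_of_ne_zero (left_ne_zero_of_mul hd)
  rw [Nat.mul_div_cancel_left q he, ramanujanSum]
  refine sum_nbij' (fun j => e * j) (fun k => k / e) ?_ ?_ ?_ ?_ ?_
  · intro j hj
    simp only [mem_filter, mem_range] at hj ⊢
    refine ⟨Nat.mul_lt_mul_of_pos_left hj.1 he, ?_⟩
    rw [Nat.gcd_mul_left, hj.2, mul_one]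
  · intro k hk
    simp only [mem_filter, mem_range] at hk ⊢
    obtain ⟨hkd, hke⟩ := hk
    refine ⟨(Nat.div_lt_iff_lt_mul he).2 (by rwa [mul_comm]), ?_⟩
    have := Nat.coprime_div_gcd_div_gcd (m := k) (n := e * q) (by rw [hke]; exact he)
    rwa [hke, Nat.mul_div_cancel_left q he] at this
  · intro j _
    exact Nat.mul_div_cancel_left j he
  · intro k hk
    simp only [mem_filter, mem_range] at hk
    exact Nat.mul_div_cancel' (hk.2 ▸ Nat.gcd_dvd_left k (e * q))
  · intro j _
    have he' : (e : ℂ) ≠ 0 := Nat.cast_ne_zero.2 he.ne'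
    push_cast
    field_simp

theorem sum_divisors_ramanujanSum {d : ℕ} (hd : d ≠ 0) (a : ℕ) :
    ∑ q ∈ d.divisors, ramanujanSum q a = if d ∣ a then (d : ℂ) else 0 := by
  rw [← Nat.sum_div_divisors, ← sum_range_exp_eq_ite hd,
    ← sum_fiberwise_of_maps_to (s := range d) (g := fun k => k.gcd d) (t := d.divisors)
      fun k _ => Nat.mem_divisors.2 ⟨Nat.gcd_dvd_right k d, hd⟩]
  exact sum_congr rfl fun e he => ramanujanSum_div_eq_sum_gcd_eq hd (Nat.dvd_of_mem_divisors he) a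

theorem sum_Icc_mul_ramanujanSum (f : ℕ → ℂ) (D a : ℕ) :
    ∑ q ∈ Icc 1 D, (∑ d ∈ (Icc 1 D).filter (fun d => q ∣ d), f d / d) * ramanujanSum q a
      = ∑ d ∈ (Icc 1 D).filter (fun d => d ∣ a), f d := by
  have hdiv (q d : ℕ) :
      q ∈ Icc 1 D ∧ d ∈ (Icc 1 D).filter (fun d => q ∣ d) ↔ q ∈ d.divisors ∧ d ∈ Icc 1 D := by
    simp only [mem_filter, mem_Icc, Nat.mem_divisors]
    constructor
    · rintro ⟨-, ⟨hd1, hdD⟩, hqd⟩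
      omega
    · rintro ⟨⟨hqd, -⟩, hd1, hdD⟩
      have := Nat.le_of_dvd hd1 hqd
      have := Nat.pos_of_dvd_of_pos hqd hd1
      omega
  simp only [sum_mul]
  rw [sum_comm' hdiv, sum_filter]
  refine sum_congr rfl fun d hd => ?_
  have hd0 : d ≠ 0 := by simp only [mem_Icc] at hd; omega
  rw [← mul_sum, sum_divisors_ramanujanSum hd0]
  split_ifs
  · exact div_mul_cancel₀ _ (Nat.cast_ne_zero.2 hd0)
  · exact mul_zero _

theorem stmt_3_general (g : ℕ → ℂ) (D : ℕ)
    (hD : ∀ d, eratosthenes g d ≠ 0 → d ≤ D) :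
    ∀ a : ℕ, 1 ≤ a → g a = ∑ q ∈ Finset.Icc 1 D, wintner g D q * ramanujanSum q a := by
  intro a ha
  have hdivisors : (Icc 1 D).filter (fun d => d ∣ a) = a.divisors.filter (fun d => d ≤ D) := by
    ext d
    simp only [mem_filter, mem_Icc, Nat.mem_divisors]
    constructor
    · rintro ⟨⟨-, hdD⟩, hda⟩
      exact ⟨⟨hda, by omega⟩, hdD⟩
    · rintro ⟨⟨hda, -⟩, hdD⟩
      exact ⟨⟨Nat.pos_of_dvd_of_pos hda ha, hdD⟩, hda⟩
  simp only [wintner]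
  rw [sum_Icc_mul_ramanujanSum, hdivisors,
    sum_filter_of_ne fun d _ hd => hD d hd, sum_divisors_eratosthenes g ha]

/-- Finite Ramanujan expansion of a nonzero truncated divisor sum. -/
theorem stmt_3 (g : ℕ → ℂ) (D : ℕ)
    (hD : ∀ d, eratosthenes g d ≠ 0 → d ≤ D)
    (hDmax : eratosthenes g D ≠ 0) :
    ∀ a : ℕ, 1 ≤ a → g a = ∑ q ∈ Finset.Icc 1 D, wintner g D q * ramanujanSum q a :=
  stmt_3_general g D hD
end

section
/- Let g : ℕ → ℂ be a truncated divisor sum with supp(g') ⊆ [1,D] and let S ⊆ ℕ be divisor-closed. If supp(ĝ) ⊆ S for the Wintner coefficients ĝ(q) = ∑_{d ≤ D, q ∣ d} g'(d)/d, then supp(g') ⊆ S. -/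
open Finset

lemma moebius_sum_div (n : ℕ) :
    ∑ k ∈ n.divisors, (ArithmeticFunction.moebius k : ℂ) = if n = 1 then 1 else 0 := by
  have h : ((ArithmeticFunction.moebius : ArithmeticFunction ℂ) *
      ArithmeticFunction.zeta) n = (1 : ArithmeticFunction ℂ) n := by
    rw [ArithmeticFunction.coe_moebius_mul_coe_zeta]
  rw [ArithmeticFunction.coe_mul_zeta_apply, ArithmeticFunction.one_apply] at h
  simpa using h

/-- Lucht expansion. -/
lemma lucht (g : ℕ → ℂ) (D : ℕ) (hD : ∀ d, eratosthenes g d ≠ 0 → d ≤ D)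
    (d : ℕ) (hd1 : 1 ≤ d) (hdD : d ≤ D) :
    ∑ K ∈ Finset.Icc 1 (D / d), (ArithmeticFunction.moebius K : ℂ) * wintner g D (d * K)
      = eratosthenes g d / d := by
  unfold wintner
  simp_rw [Finset.mul_sum]
  rw [Finset.sum_comm' (t' := Finset.Icc 1 D)
    (s' := fun e => (Finset.Icc 1 (D / d)).filter (fun K => d * K ∣ e))]
  · have key : ∀ e ∈ Finset.Icc 1 D,
        (∑ K ∈ (Finset.Icc 1 (D / d)).filter (fun K => d * K ∣ e),
          (ArithmeticFunction.moebius K : ℂ) * (eratosthenes g e / e))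
        = if e = d then eratosthenes g d / d else 0 := by
      intro e he
      rw [Finset.mem_Icc] at he
      rw [← Finset.sum_mul]
      by_cases hde : d ∣ e
      · have hfilter : (Finset.Icc 1 (D / d)).filter (fun K => d * K ∣ e)
            = (e / d).divisors := by
          ext K
          simp only [Finset.mem_filter, Finset.mem_Icc, Nat.mem_divisors]
          constructor
          · rintro ⟨⟨hK1, hK2⟩, hdvd⟩
            constructor
            · obtain ⟨c, hc⟩ := hdvd
              refine ⟨c, ?_⟩
              rw [hc, mul_assoc, Nat.mul_div_cancel_left _ (by omega)]
            · have : d ≤ e := le_trans (Nat.le_mul_of_pos_right d (by omega))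
                (Nat.le_of_dvd (by omega) hdvd)
              have : 1 ≤ e / d := (Nat.one_le_div_iff (by omega)).mpr this
              omega
          · rintro ⟨hKdvd, hne⟩
            have hK1 : 1 ≤ K := Nat.one_le_iff_ne_zero.mpr (by
              rintro rfl; exact hne (by simpa using (Nat.eq_zero_of_zero_dvd hKdvd)))
            have hKle : K ≤ e / d := Nat.le_of_dvd (Nat.pos_of_ne_zero hne) hKdvd
            have hed : e / d ≤ D / d := Nat.div_le_div_right he.2
            refine ⟨⟨hK1, le_trans hKle hed⟩, ?_⟩
            obtain ⟨c, hc⟩ := hKdvd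
            refine ⟨c, ?_⟩
            rw [mul_assoc, ← hc, Nat.mul_div_cancel' hde]
        rw [hfilter, moebius_sum_div]
        have hedpos : e / d ≠ 0 := by
          have := Nat.le_of_dvd (by omega) hde
          have : 1 ≤ e / d := Nat.one_le_div_iff (by omega) |>.mpr this
          omega
        by_cases hed1 : e / d = 1
        · have : e = d := by
            have := Nat.div_mul_cancel hde
            rw [hed1, one_mul] at this
            omega
          simp [hed1, this, Nat.div_self (show 0 < d by omega)]
        · have : e ≠ d := by
            rintro rfl
            exact hed1 (Nat.div_self (by omega))
          simp [hed1, this, Nat.div_self (show 0 < d by omega)]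
      · have hfilter : (Finset.Icc 1 (D / d)).filter (fun K => d * K ∣ e) = ∅ := by
          ext K
          simp only [Finset.mem_filter, Finset.mem_Icc, Finset.notMem_empty, iff_false]
          rintro ⟨_, hdvd⟩
          exact hde (dvd_trans (Dvd.intro K rfl) hdvd)
        have : e ≠ d := by rintro rfl; exact hde dvd_rfl
        simp [hfilter, this]
    rw [Finset.sum_congr rfl key, Finset.sum_ite_eq' (Finset.Icc 1 D) d
      (fun _ => eratosthenes g d / d)]
    simp [Finset.mem_Icc, hd1, hdD]
  · intro x y
    simp only [Finset.mem_filter]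
    tauto

/-- Converse support transfer: if `supp(ĝ) ⊆ S` with `S` divisor-closed,
then `supp(g') ⊆ S`. -/
theorem stmt_7 (g : ℕ → ℂ) (D : ℕ) (S : Set ℕ)
    (hD : ∀ d, eratosthenes g d ≠ 0 → d ≤ D)
    (hSdc : ∀ n ∈ S, ∀ d, d ∣ n → d ∈ S)
    (hsupp : ∀ q, wintner g D q ≠ 0 → q ∈ S) :
    ∀ d, eratosthenes g d ≠ 0 → d ∈ S := by
  intro d hd
  have hd1 : 1 ≤ d := by
    by_contra h
    have : d = 0 := by omega
    subst this
    apply hd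
    simp [eratosthenes]
  have hdD : d ≤ D := hD d hd
  have hne : eratosthenes g d / d ≠ 0 := by
    apply div_ne_zero hd
    exact_mod_cast (by omega : d ≠ 0)
  rw [← lucht g D hD d hd1 hdD] at hne
  obtain ⟨K, _, hK⟩ := Finset.exists_ne_zero_of_sum_ne_zero hne
  have hwK : wintner g D (d * K) ≠ 0 := fun h => hK (by simp [h])
  exact hSdc _ (hsupp _ hwK) d ⟨K, rfl⟩
end
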